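/- arXiv:1208.2783 — 2 statements merged into one kernel-verified Lean document; each statement's English description precedes it below -/
import Mathlib

section
/- Composition restricted to CA × SUR is continuous in the uniform Bernoulli metric: if cᵢ → c and dᵢ → d with all dᵢ surjective, then cᵢ ∘ dᵢ → c ∘ d. Quantitatively, if δ(cᵢ,c) < ε and δ(dᵢ,d) < ε with r(cᵢ) ≥ r(c) and r(dᵢ) ≥ r(d), then δ(cᵢ ∘ dᵢ, c ∘ d) < (2·r(c)+2)·ε. -/
open MeasureTheory Filter Function

section BasicDefs

variable {A : Type}

/-- `f` admits a local rule of radius `r`: there is `F` depending only on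
coordinates in `[-r, r]` such that `f x i = F (σ^i x)`. -/
def HasRadius (r : ℕ) (f : (ℤ → A) → (ℤ → A)) : Prop :=
  ∃ F : (ℤ → A) → A,
    (∀ x y : ℤ → A, (∀ j : ℤ, |j| ≤ (r : ℤ) → x j = y j) → F x = F y) ∧
    ∀ (x : ℤ → A) (i : ℤ), f x i = F fun j => x (i + j)

/-- A cellular automaton is a map admitting a local rule of some radius. -/
def IsCA (f : (ℤ → A) → (ℤ → A)) : Prop := ∃ r, HasRadius r f

/-- The minimal radius of a cellular automaton. -/
noncomputable def rad (f : (ℤ → A) → (ℤ → A)) : ℕ := sInf {r : ℕ | HasRadius r f}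

/-- Centered words of radius `r`. -/
def Word (A : Type) (r : ℕ) := (Finset.Icc (-(r : ℤ)) (r : ℤ) : Finset ℤ) → A

/-- The difference set of `c` and `d` for radius `r`: centered words of radius `r`
on which the images of `c` and `d` differ at the central cell. -/
def diffSet (r : ℕ) (c d : (ℤ → A) → (ℤ → A)) : Set (Word A r) :=
  {w | ∃ x : ℤ → A, (∀ j : (Finset.Icc (-(r : ℤ)) (r : ℤ) : Finset ℤ), x j.1 = w j) ∧
        c x 0 ≠ d x 0}

/-- The shift map. -/
def shift (x : ℤ → A) : ℤ → A := fun i => x (i + 1)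

/-- Preimages of the centered word `v` of radius `n` under the word function of `c`
used with radius `r`: centered words `u` of radius `n + r` such that some (equivalently,
by the radius assumption, every) configuration extending `u` maps under `c` to a
configuration extending `v` in its central part. -/
def wordPreimages (c : (ℤ → A) → (ℤ → A)) (n r : ℕ) (v : Word A n) :
    Set (Word A (n + r)) :=
  {u | ∃ x : ℤ → A,
        (∀ j : (Finset.Icc (-((n + r : ℕ) : ℤ)) ((n + r : ℕ) : ℤ) : Finset ℤ), x j.1 = u j) ∧
        ∀ j : (Finset.Icc (-(n : ℤ)) (n : ℤ) : Finset ℤ), c x j.1 = v j}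

-- The Cantor metric on configurations.
open Classical in
noncomputable def dC (x y : ℤ → A) : ℝ :=
  ∑' i : ℤ, if x i ≠ y i then (2 : ℝ) ^ (-|i|) else 0

/-- The Besicovitch pseudodistance on configurations. -/
noncomputable def dB (x y : ℤ → A) : ℝ :=
  limsup (fun n : ℕ =>
    (({i : ℤ | |i| ≤ (n : ℤ) ∧ x i ≠ y i}.ncard : ℝ)) / (2 * (n : ℝ) + 1)) atTop

end BasicDefs

section FintypeDefs

variable {A : Type} [Fintype A]

/-- The normalized size of the difference set for radius `r`. -/
noncomputable def deltaR (r : ℕ) (c d : (ℤ → A) → (ℤ → A)) : ℝ :=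
  (diffSet r c d).ncard / (Fintype.card A : ℝ) ^ (2 * r + 1)

/-- The uniform Bernoulli distance between two cellular automata (computed with the
common radius `max (rad c) (rad d)`; by radius-independence this is the canonical value). -/
noncomputable def delta (c d : (ℤ → A) → (ℤ → A)) : ℝ :=
  deltaR (max (rad c) (rad d)) c d

end FintypeDefs

section MeasureDefs

variable {A : Type} [MeasurableSpace A]

/-- The pseudometric on cellular automata induced by the measure `μ`:
the measure of the cylinder of the difference set, i.e. of the set of
configurations on which `c` and `d` differ at coordinate `0`. -/
noncomputable def deltaMu (μ : Measure (ℤ → A)) (c d : (ℤ → A) → (ℤ → A)) : ℝ :=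
  (μ {x | c x 0 ≠ d x 0}).toReal

/-- `c` preserves the measure `μ`. -/
def Preserves (μ : Measure (ℤ → A)) (c : (ℤ → A) → (ℤ → A)) : Prop :=
  ∀ B : Set (ℤ → A), MeasurableSet B → μ (c ⁻¹' B) = μ B

/-- `μ` is shift-invariant. -/
def ShiftInvariant (μ : Measure (ℤ → A)) : Prop :=
  ∀ B : Set (ℤ → A), MeasurableSet B → μ (shift ⁻¹' B) = μ B

end MeasureDefs

/-!
If `cᵢ ∘ dᵢ` and `c ∘ d` differ at the origin of a configuration, then either `cᵢ` and `c` differ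
at the origin of its image under `dᵢ`, or `dᵢ` and `d` differ at one of the `2 r(c) + 1` cells read
by `c`. Each of the latter events has probability `δ(dᵢ, d)`; the former has probability `δ(cᵢ, c)`
because a surjective cellular automaton is balanced, so that it maps the uniform Bernoulli measure
to itself. Hence `δ(cᵢ ∘ dᵢ, c ∘ d) ≤ δ(cᵢ, c) + (2 r(c) + 1) δ(dᵢ, d)`, which gives both claims.

Balance, i.e. that under a surjective automaton of radius `s` every word has exactly `|A| ^ (2 s)`
preimages: let `w` be a word with the least number `N(w)` of preimages under the word map. The
preimage counts of the `|A| ^ K` extensions of a word by `K` letters add up to `|A| ^ K` times its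
count, so every word containing `w` has exactly `N(w)` preimages. Fix a preimage `ξ` of `w`, of
length `B`. Summing the preimage counts of `u v` over the words `u` of length `t B` gives
`|A| ^ (t B) (N(v) - N(w)) ≤ (|A| ^ B - 1) ^ t |A| ^ (2 s) N(v)`, because a preimage of a word that
avoids `w` has no aligned block equal to `ξ`. Letting `t → ∞` gives `N(v) ≤ N(w)`.
-/

open Finset

theorem card_filter_comp_of_injective {A X Y : Type*} [Fintype A] [Fintype X] [DecidableEq X]
    [Fintype Y] [DecidableEq Y] {e : X → Y} (he : Injective e)
    (p : (X → A) → Prop) [DecidablePred p] :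
    #{x : Y → A | p (x ∘ e)} = Fintype.card A ^ (Fintype.card Y - Fintype.card X) * #{y | p y} := by
  classical
  let split : (Y → A) ≃ (X → A) × ({b // b ∉ Set.range e} → A) :=
    (Equiv.piEquivPiSubtypeProd (· ∈ Set.range e) _).trans
      (Equiv.prodCongr (Equiv.arrowCongr (Equiv.ofInjective e he).symm (Equiv.refl A))
        (Equiv.refl _))
  have hsplit : ∀ x, (split x).1 = x ∘ e := fun x => rfl
  simp only [← Fintype.card_subtype]
  rw [Fintype.card_congr ((split.subtypeEquiv fun x => by rw [hsplit]).trans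
    Equiv.prodSubtypeFstEquivSubtypeProd), Fintype.card_prod, Fintype.card_fun,
    Fintype.card_subtype_compl, Set.card_range_of_injective he, mul_comm]

theorem card_filter_forall_ne {ι β : Type*} [Fintype ι] [DecidableEq ι] [Fintype β]
    [DecidableEq β] (b : β) :
    #{g : ι → β | ∀ i, g i ≠ b} = (Fintype.card β - 1) ^ Fintype.card ι := by
  have : ({g | ∀ i, g i ≠ b} : Finset (ι → β)) = Fintype.piFinset fun _ => univ.erase b := by
    ext; simp
  rw [this, Fintype.card_piFinset, prod_const, card_erase_of_mem (mem_univ b), card_univ, card_univ]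

theorem nonpos_of_forall_le_pow_mul {a r C : ℝ} (hr₀ : 0 ≤ r) (hr₁ : r < 1)
    (h : ∀ t : ℕ, a ≤ r ^ t * C) : a ≤ 0 :=
  ge_of_tendsto' (by simpa using (tendsto_pow_atTop_nhds_zero_of_lt_one hr₀ hr₁).mul_const C) h

theorem ncard_setOf_comp_mem {A X Y : Type*} [Fintype A] [Fintype X] [DecidableEq X] [Fintype Y]
    [DecidableEq Y] {e : X → Y} (he : Injective e) (S : Set (X → A)) :
    {x : Y → A | x ∘ e ∈ S}.ncard =
      Fintype.card A ^ (Fintype.card Y - Fintype.card X) * S.ncard := by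
  classical
  simpa [Set.ncard_eq_toFinset_card'] using card_filter_comp_of_injective he (· ∈ S)

theorem ncard_preimage_of_forall_ncard_fiber {α β : Type*} [Fintype α] [Fintype β] {π : α → β}
    {k : ℕ} (h : ∀ b, (π ⁻¹' {b}).ncard = k) (T : Set β) : (π ⁻¹' T).ncard = k * T.ncard := by
  classical
  simp only [Set.ncard_eq_toFinset_card'] at h ⊢
  rw [card_eq_sum_card_fiberwise (f := π) (t := T.toFinset) (fun a ha => by simpa using ha),
    sum_congr rfl fun b hb => ?_, sum_const, smul_eq_mul, mul_comm]
  rw [← h b]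
  congr 1
  ext a
  simp only [mem_filter, Set.mem_toFinset, Set.mem_preimage, Set.mem_singleton_iff] at hb ⊢
  exact ⟨fun h => h.2, fun h => ⟨h ▸ hb, h⟩⟩

theorem card_Icc_neg_self (R : ℕ) : Fintype.card (Finset.Icc (-(R : ℤ)) R) = 2 * R + 1 := by
  simp only [Fintype.card_coe, Int.card_Icc]
  omega

def finEquivIcc (R N : ℕ) (h : N = 2 * R + 1) : Fin N ≃ Finset.Icc (-(R : ℤ)) R where
  toFun k := ⟨k - R, by rw [Finset.mem_Icc]; omega⟩
  invFun j := ⟨((j : ℤ) + R).toNat, by have := Finset.mem_Icc.1 j.2; omega⟩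
  left_inv k := by ext; simp
  right_inv j := by ext; have := Finset.mem_Icc.1 j.2; simp; omega

namespace SlidingBlock

variable {A : Type*} {m : ℕ}

def wordMap (G : (Fin (m + 1) → A) → A) (n : ℕ) (x : Fin (n + m) → A) : Fin n → A :=
  fun i => G fun j => x ⟨i + j, by omega⟩

def slice {N : ℕ} (a : ℕ) (x : Fin N → A) {n : ℕ} (h : a + n ≤ N) : Fin n → A :=
  fun i => x ⟨a + i, by omega⟩

def OccursIn {k N : ℕ} (w : Fin k → A) (u : Fin N → A) : Prop :=
  ∃ a, ∃ h : a + k ≤ N, slice a u h = w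

theorem slice_wordMap (G : (Fin (m + 1) → A) → A) {N n : ℕ} (a : ℕ) (x : Fin (N + m) → A)
    (h : a + n ≤ N) : slice a (wordMap G N x) h = wordMap G n (slice a x (by omega)) := by
  ext i
  simp only [slice, wordMap, add_assoc]

@[simp] theorem slice_append_left {K n : ℕ} (u : Fin K → A) (v : Fin n → A) :
    slice 0 (Fin.append u v) (by omega) = u := by
  ext i
  simp only [slice, zero_add]
  exact Fin.append_left u v i

@[simp] theorem slice_append_right {K n : ℕ} (u : Fin K → A) (v : Fin n → A) :
    slice K (Fin.append u v) (by omega) = v := by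
  ext i
  exact Fin.append_right u v i

theorem OccursIn.append_right {k K n : ℕ} {w : Fin k → A} {u : Fin K → A} (hu : OccursIn w u)
    (v : Fin n → A) : OccursIn w (Fin.append u v) := by
  obtain ⟨a, h, rfl⟩ := hu
  exact ⟨a, by omega, funext fun i => Fin.append_left u v ⟨a + i, by omega⟩⟩

theorem occursIn_wordMap_of_slice_eq (G : (Fin (m + 1) → A) → A) {k N : ℕ}
    {ξ : Fin (k + m) → A} {y : Fin (N + m) → A} {a : ℕ} (h : a + (k + m) ≤ N + m)
    (hy : slice a y h = ξ) : OccursIn (wordMap G k ξ) (wordMap G N y) :=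
  ⟨a, by omega, by rw [slice_wordMap, ← hy]⟩

section Counting

variable [Fintype A]

theorem card_filter_slice {N n : ℕ} (a : ℕ) (h : a + n ≤ N) (p : (Fin n → A) → Prop)
    [DecidablePred p] :
    #{x : Fin N → A | p (slice a x h)} = Fintype.card A ^ (N - n) * #{y | p y} := by
  have he : Injective fun i : Fin n => (⟨a + i, by omega⟩ : Fin N) := fun i j hij =>
    Fin.ext (by simpa using hij)
  have := card_filter_comp_of_injective (A := A) he p
  simp only [Fintype.card_fin] at this
  exact this

variable [DecidableEq A]

theorem sum_append_left {K n : ℕ} {M : Type*} [AddCommMonoid M] (F : (Fin (K + n) → A) → M)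
    (v : Fin n → A) : ∑ u, F (Fin.append u v) = ∑ y with slice K y (by omega) = v, F y := by
  rw [sum_filter, ← (Fin.appendEquiv K n).sum_comp, Fintype.sum_prod_type]
  simp [Fin.appendEquiv]

theorem sum_append_right {K n : ℕ} {M : Type*} [AddCommMonoid M] (F : (Fin (n + K) → A) → M)
    (v : Fin n → A) : ∑ u, F (Fin.append v u) = ∑ y with slice 0 y (by omega) = v, F y := by
  rw [sum_filter, ← (Fin.appendEquiv n K).sum_comp, Fintype.sum_prod_type_right]
  simp [Fin.appendEquiv]

theorem card_filter_forall_block_ne {B : ℕ} (ξ : Fin B → A) (t : ℕ) :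
    #{y : Fin (t * B + m) → A | ∀ j : Fin t, slice (B * j) y (by nlinarith [j.isLt]) ≠ ξ} =
      (Fintype.card A ^ B - 1) ^ t * Fintype.card A ^ m := by
  set e : Fin t × Fin B → Fin (t * B + m) := fun p => Fin.castAdd m (finProdFinEquiv p)
  have he : Injective e := (Fin.castAdd_injective _ _).comp finProdFinEquiv.injective
  have hblock : ∀ (y : Fin (t * B + m) → A) (j : Fin t),
      slice (B * j) y (by nlinarith [j.isLt]) = fun i => y (e (j, i)) := fun y j => by
    ext i
    simp only [slice, e]
    congr 1
    ext
    simp [add_comm]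
  simp_rw [hblock]
  refine (card_filter_comp_of_injective he (fun z => ∀ j, (fun i => z (j, i)) ≠ ξ)).trans ?_
  rw [card_equiv (Equiv.curry (Fin t) (Fin B) A) (t := {g | ∀ j, g j ≠ ξ}) (fun z => by simp; rfl)]
  convert congrArg (Fintype.card A ^ m * ·) (card_filter_forall_ne (ι := Fin t) ξ) using 1
  · simp
  · simp [mul_comm]

variable (G : (Fin (m + 1) → A) → A)

def preimageCount (n : ℕ) (v : Fin n → A) : ℕ := #{x | wordMap G n x = v}

theorem preimageCount_zero (v : Fin 0 → A) : preimageCount G 0 v = Fintype.card A ^ m := by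
  simp [preimageCount, Subsingleton.elim _ v]

theorem sum_preimageCount_filter {n : ℕ} (p : (Fin n → A) → Prop) [DecidablePred p] :
    ∑ v with p v, preimageCount G n v = #{x | p (wordMap G n x)} := by
  rw [card_eq_sum_card_fiberwise (f := wordMap G n) (t := {v | p v})
    (fun x hx => by simpa using hx)]
  refine sum_congr rfl fun v hv => ?_
  rw [filter_filter, preimageCount]
  congr 1
  ext x
  simp only [mem_filter, mem_univ, true_and] at hv ⊢
  exact ⟨fun h => ⟨h ▸ hv, h⟩, fun h => h.2⟩

theorem sum_preimageCount_append_left (K : ℕ) {n : ℕ} (v : Fin n → A) :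
    ∑ u : Fin K → A, preimageCount G (K + n) (Fin.append u v) =
      Fintype.card A ^ K * preimageCount G n v := by
  rw [sum_append_left, sum_preimageCount_filter]
  simp_rw [slice_wordMap]
  rw [card_filter_slice _ _ (fun y => wordMap G n y = v), preimageCount]
  congr 2
  omega

theorem sum_preimageCount_append_right (K : ℕ) {n : ℕ} (v : Fin n → A) :
    ∑ u : Fin K → A, preimageCount G (n + K) (Fin.append v u) =
      Fintype.card A ^ K * preimageCount G n v := by
  rw [sum_append_right, sum_preimageCount_filter]
  simp_rw [slice_wordMap]
  rw [card_filter_slice _ _ (fun y => wordMap G n y = v), preimageCount]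
  congr 2
  omega

theorem preimageCount_append_le {K n : ℕ} (u : Fin K → A) (v : Fin n → A) :
    preimageCount G (K + n) (Fin.append u v) ≤ preimageCount G K u * preimageCount G n v := by
  rw [preimageCount, preimageCount, preimageCount, ← card_product]
  refine card_le_card_of_injOn (fun x => (slice 0 x (by omega), slice K x (by omega)))
    (fun x hx => ?_) (fun x _ y _ hxy => ?_)
  · simp only [coe_filter, mem_univ, true_and, Set.mem_ofPred_eq] at hx
    simp only [coe_product, coe_filter, Set.mem_prod, mem_univ, true_and, Set.mem_ofPred_eq]
    exact ⟨by rw [← slice_append_left u v, ← hx, slice_wordMap],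
      by rw [← slice_append_right u v, ← hx, slice_wordMap]⟩
  · simp only [Prod.mk.injEq] at hxy
    ext k
    by_cases hk : k < K + m
    · simpa [slice] using congrFun hxy.1 ⟨k, hk⟩
    · simpa [slice, show K + (k - K) = k by omega] using congrFun hxy.2 ⟨k - K, by omega⟩

section Minimal

variable {G} {k : ℕ} {w : Fin k → A}
  (hmin : ∀ n (v : Fin n → A), preimageCount G k w ≤ preimageCount G n v)
include hmin

theorem preimageCount_append_left_eq {n : ℕ} {v : Fin n → A}
    (hv : preimageCount G n v = preimageCount G k w) {K : ℕ} (u : Fin K → A) :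
    preimageCount G (K + n) (Fin.append u v) = preimageCount G k w := by
  have hsum : ∑ _u : Fin K → A, preimageCount G k w =
      ∑ u : Fin K → A, preimageCount G (K + n) (Fin.append u v) := by
    simp [sum_preimageCount_append_left, hv]
  exact ((sum_eq_sum_iff_of_le fun u _ => hmin _ _).1 hsum u (mem_univ u)).symm

theorem preimageCount_append_right_eq {n : ℕ} {v : Fin n → A}
    (hv : preimageCount G n v = preimageCount G k w) {K : ℕ} (u : Fin K → A) :
    preimageCount G (n + K) (Fin.append v u) = preimageCount G k w := by
  have hsum : ∑ _u : Fin K → A, preimageCount G k w =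
      ∑ u : Fin K → A, preimageCount G (n + K) (Fin.append v u) := by
    simp [sum_preimageCount_append_right, hv]
  exact ((sum_eq_sum_iff_of_le fun u _ => hmin _ _).1 hsum u (mem_univ u)).symm

theorem preimageCount_eq_of_occursIn {N : ℕ} {Y : Fin N → A} (hY : OccursIn w Y) :
    preimageCount G N Y = preimageCount G k w := by
  obtain ⟨a, h, rfl⟩ := hY
  obtain ⟨r, rfl⟩ : ∃ r, N = a + k + r := ⟨N - (a + k), by omega⟩
  rw [← preimageCount_append_right_eq hmin
    (preimageCount_append_left_eq hmin rfl (slice 0 Y (n := a) (by omega)))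
    (slice (a + k) Y (n := r) le_rfl)]
  congr 1
  ext i
  refine Fin.addCases (fun j => Fin.addCases (fun l => ?_) (fun l => ?_) j) (fun j => ?_) i <;>
    simp [slice] <;> rfl

theorem pow_mul_preimageCount_le {ξ : Fin (k + m) → A} (hξ : wordMap G k ξ = w) (t : ℕ)
    {n : ℕ} (v : Fin n → A) :
    (Fintype.card A ^ (k + m)) ^ t * preimageCount G n v ≤
      (Fintype.card A ^ (k + m)) ^ t * preimageCount G k w +
        (Fintype.card A ^ (k + m) - 1) ^ t * Fintype.card A ^ m * preimageCount G n v := by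
  classical
  have hsplit : ∀ u : Fin (t * (k + m)) → A, preimageCount G _ (Fin.append u v) ≤
      preimageCount G k w +
        if OccursIn w u then 0 else preimageCount G _ u * preimageCount G n v := by
    intro u
    split_ifs with hu
    · exact (preimageCount_eq_of_occursIn hmin (hu.append_right v)).le
    · exact (preimageCount_append_le G u v).trans (Nat.le_add_left _ _)
  have havoid : ∑ u with ¬OccursIn w u, preimageCount G (t * (k + m)) u ≤
      (Fintype.card A ^ (k + m) - 1) ^ t * Fintype.card A ^ m := by
    rw [sum_preimageCount_filter, ← card_filter_forall_block_ne ξ t]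
    refine card_le_card (monotone_filter_right _ fun y _ hy j hj => hy ?_)
    rw [← hξ]
    exact occursIn_wordMap_of_slice_eq G _ hj
  calc (Fintype.card A ^ (k + m)) ^ t * preimageCount G n v
      = ∑ u : Fin (t * (k + m)) → A, preimageCount G _ (Fin.append u v) := by
        rw [sum_preimageCount_append_left, pow_mul']
    _ ≤ ∑ u : Fin (t * (k + m)) → A, (preimageCount G k w +
          if OccursIn w u then 0 else preimageCount G _ u * preimageCount G n v) :=
        sum_le_sum fun u _ => hsplit u
    _ ≤ _ := by
        rw [sum_add_distrib, sum_const, card_univ, Fintype.card_fun, Fintype.card_fin, smul_eq_mul,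
          sum_ite, sum_const_zero, zero_add, ← sum_mul, pow_mul']
        gcongr

theorem preimageCount_le_of_minimal [Nonempty A] {ξ : Fin (k + m) → A} (hξ : wordMap G k ξ = w)
    {n : ℕ} (v : Fin n → A) : preimageCount G n v ≤ preimageCount G k w := by
  set D := Fintype.card A ^ (k + m)
  have hD : 1 ≤ D := Nat.one_le_pow _ _ Fintype.card_pos
  have hD' : (0 : ℝ) < D := by exact_mod_cast hD
  suffices (preimageCount G n v : ℝ) - preimageCount G k w ≤ 0 by
    exact_mod_cast sub_nonpos.1 this
  refine nonpos_of_forall_le_pow_mul (r := ((D : ℝ) - 1) / D)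
    (C := Fintype.card A ^ m * preimageCount G n v) (by bound) (by bound) fun t => ?_
  have h : ((D ^ t * preimageCount G n v : ℕ) : ℝ) ≤ ((D ^ t * preimageCount G k w +
      (D - 1) ^ t * Fintype.card A ^ m * preimageCount G n v : ℕ) : ℝ) := by
    exact_mod_cast pow_mul_preimageCount_le hmin hξ t v
  push_cast [Nat.cast_sub hD] at h
  rw [div_pow, div_mul_eq_mul_div, le_div_iff₀ (by positivity)]
  linarith

end Minimal

theorem preimageCount_eq_pow [Nonempty A] (hG : ∀ n, Surjective (wordMap G n)) {n : ℕ}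
    (v : Fin n → A) : preimageCount G n v = Fintype.card A ^ m := by
  let N : (Σ k, Fin k → A) → ℕ := fun p => preimageCount G p.1 p.2
  obtain ⟨⟨k, w⟩, hmin⟩ : ∃ p, ∀ n (v : Fin n → A), N p ≤ preimageCount G n v :=
    ⟨argmin N, fun n v => argmin_le N ⟨n, v⟩⟩
  obtain ⟨ξ, hξ⟩ := hG k w
  have hconst : ∀ n (v : Fin n → A), preimageCount G n v = preimageCount G k w := fun n v =>
    (preimageCount_le_of_minimal hmin hξ v).antisymm (hmin n v)
  rw [hconst, ← hconst 0 Fin.elim0, preimageCount_zero]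

end Counting

end SlidingBlock

section CellularAutomata

variable {A : Type} {r R s t : ℕ} {f g c d : (ℤ → A) → (ℤ → A)}

theorem HasRadius.mono (h : r ≤ R) (hf : HasRadius r f) : HasRadius R f := by
  obtain ⟨F, hF, hfF⟩ := hf
  exact ⟨F, fun x y hxy => hF x y fun j hj => hxy j (hj.trans (by exact_mod_cast h)), hfF⟩

theorem IsCA.hasRadius_rad (hf : IsCA f) : HasRadius (rad f) f :=
  Nat.sInf_mem hf

theorem rad_le (hf : HasRadius r f) : rad f ≤ r :=
  Nat.sInf_le hf

theorem HasRadius.comp (hf : HasRadius r f) (hg : HasRadius s g) : HasRadius (r + s) (f ∘ g) := by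
  obtain ⟨F, hF, hfF⟩ := hf
  obtain ⟨G, hG, hgG⟩ := hg
  refine ⟨fun x => F fun j => G fun k => x (j + k), fun x y hxy => ?_, fun x i => ?_⟩
  · refine hF _ _ fun j hj => hG _ _ fun k hk => hxy _ ?_
    push_cast
    exact (abs_add_le j k).trans (add_le_add hj hk)
  · simp only [comp_apply, hfF, hgG, add_assoc]

theorem HasRadius.apply_eq_apply (hf : HasRadius r f) {x y : ℤ → A} {i j : ℤ}
    (h : ∀ k : ℤ, |k| ≤ r → x (i + k) = y (j + k)) : f x i = f y j := by
  obtain ⟨F, hF, hfF⟩ := hf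
  rw [hfF, hfF]
  exact hF _ _ h

theorem HasRadius.exists_ne_of_apply_ne (hf : HasRadius r f) {x y : ℤ → A} {i j : ℤ}
    (h : f x i ≠ f y j) : ∃ k : ℤ, |k| ≤ r ∧ x (i + k) ≠ y (j + k) := by
  by_contra! hxy
  exact h (hf.apply_eq_apply hxy)

theorem HasRadius.exists_localRule (hf : HasRadius s f) :
    ∃ G : (Fin (2 * s + 1) → A) → A, ∀ x i, f x i = G fun l => x (i + l - s) := by
  obtain ⟨F, hF, hfF⟩ := hf
  -- the `min` only makes the index valid; `F` reads nothing outside `|j| ≤ s`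
  refine ⟨fun z => F fun j => z ⟨min (j + s).toNat (2 * s), by omega⟩, fun x i => ?_⟩
  rw [hfF]
  refine hF _ _ fun j hj => ?_
  rw [abs_le] at hj
  congr 1
  dsimp only
  omega

theorem wordMap_surjective [Nonempty A] {G : (Fin (2 * s + 1) → A) → A}
    (hG : ∀ x i, f x i = G fun l => x (i + l - s)) (hf : Surjective f) (n : ℕ) :
    Surjective (SlidingBlock.wordMap G n) := by
  intro v
  obtain ⟨x, hx⟩ := hf fun i =>
    if h : 0 ≤ i ∧ i < n then v ⟨i.toNat, by omega⟩ else Classical.arbitrary A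
  refine ⟨fun k => x (k - s), funext fun i => ?_⟩
  have hi := congrFun hx i
  rw [hG, dif_pos (by omega)] at hi
  simp only [SlidingBlock.wordMap, Nat.cast_add]
  rw [hi]
  simp

noncomputable def Word.extend [Nonempty A] (w : Word A R) : ℤ → A := fun i =>
  if h : i ∈ Finset.Icc (-(R : ℤ)) R then w ⟨i, h⟩ else Classical.arbitrary A

theorem Word.extend_of_mem [Nonempty A] (w : Word A R) {i : ℤ}
    (h : i ∈ Finset.Icc (-(R : ℤ)) R) : w.extend i = w ⟨i, h⟩ :=
  dif_pos h

theorem mem_diffSet_iff [Nonempty A] (hc : HasRadius r c) (hd : HasRadius r d) (hrR : r ≤ R)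
    (w : Word A R) : w ∈ diffSet R c d ↔ c w.extend 0 ≠ d w.extend 0 := by
  refine ⟨fun ⟨x, hx, hne⟩ => ?_, fun h => ⟨w.extend, fun j => w.extend_of_mem j.2, h⟩⟩
  have hxw : ∀ k : ℤ, |k| ≤ r → x (0 + k) = w.extend (0 + k) := fun k hk => by
    have hk' : 0 + k ∈ Finset.Icc (-(R : ℤ)) R := by
      rw [abs_le] at hk; simp only [Finset.mem_Icc]; omega
    rw [w.extend_of_mem hk', ← hx ⟨_, hk'⟩]
  rwa [← hc.apply_eq_apply hxw, ← hd.apply_eq_apply hxw]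

theorem mem_wordPreimages_iff [Nonempty A] (hd : HasRadius r d) {n : ℕ} (v : Word A n)
    (u : Word A (n + r)) : u ∈ wordPreimages d n r v ↔ ∀ j, d u.extend j.1 = v j := by
  refine ⟨fun ⟨x, hx, hxv⟩ j => ?_, fun h => ⟨u.extend, fun j => u.extend_of_mem j.2, h⟩⟩
  rw [← hxv j]
  refine hd.apply_eq_apply fun k hk => ?_
  have hjk : j.1 + k ∈ Finset.Icc (-((n + r : ℕ) : ℤ)) ((n + r : ℕ) : ℤ) := by
    have := Finset.mem_Icc.1 j.2
    rw [abs_le] at hk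
    rw [Finset.mem_Icc]
    push_cast
    omega
  rw [u.extend_of_mem hjk, hx ⟨_, hjk⟩]

section Counting

variable [Fintype A]

noncomputable instance (R : ℕ) : Fintype (Word A R) :=
  inferInstanceAs (Fintype (Finset.Icc (-(R : ℤ)) R → A))

theorem ncard_setOf_apply_ne [Nonempty A] (hc : HasRadius r c) (hd : HasRadius r d) {j : ℤ}
    (hj : |j| + r ≤ R) :
    {w : Word A R | c w.extend j ≠ d w.extend j}.ncard =
      Fintype.card A ^ (2 * R - 2 * r) * (diffSet r c d).ncard := by
  have hj' := abs_le.1 (le_refl |j|)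
  let e : Finset.Icc (-(r : ℤ)) r → Finset.Icc (-(R : ℤ)) R := fun k =>
    ⟨k + j, by have := Finset.mem_Icc.1 k.2; rw [Finset.mem_Icc]; omega⟩
  have he : Injective e := fun k l hkl => Subtype.ext (by simpa [e] using hkl)
  let ρ : Word A R → Word A r := fun w => w ∘ e
  have hset : {w : Word A R | c w.extend j ≠ d w.extend j} = {w | ρ w ∈ diffSet r c d} := by
    ext w
    change c w.extend j ≠ d w.extend j ↔ ρ w ∈ diffSet r c d
    rw [mem_diffSet_iff hc hd le_rfl]
    have hw : ∀ k : ℤ, |k| ≤ r → w.extend (j + k) = (ρ w).extend (0 + k) := fun k hk => by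
      have hk' : k ∈ Finset.Icc (-(r : ℤ)) r := by rw [abs_le] at hk; simpa using hk
      rw [zero_add, Word.extend_of_mem _ hk', add_comm j k]
      exact w.extend_of_mem (e ⟨k, hk'⟩).2
    rw [hc.apply_eq_apply hw, hd.apply_eq_apply hw]
  rw [hset]
  refine (ncard_setOf_comp_mem he (diffSet r c d)).trans ?_
  rw [card_Icc_neg_self, card_Icc_neg_self]
  congr 2
  omega

theorem deltaR_eq_of_le [Nonempty A] (hc : HasRadius r c) (hd : HasRadius r d) (hrR : r ≤ R) :
    deltaR R c d = deltaR r c d := by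
  have hset : diffSet R c d = {w : Word A R | c w.extend 0 ≠ d w.extend 0} :=
    Set.ext fun w => mem_diffSet_iff hc hd hrR w
  have hq : (0 : ℝ) < Fintype.card A := by exact_mod_cast Fintype.card_pos
  rw [deltaR, deltaR, hset, ncard_setOf_apply_ne hc hd (by simpa using hrR),
    show 2 * R + 1 = (2 * R - 2 * r) + (2 * r + 1) by omega, pow_add]
  push_cast
  exact mul_div_mul_left _ _ (by positivity)

theorem delta_eq_deltaR [Nonempty A] (hc : IsCA c) (hd : IsCA d) (hcR : HasRadius R c)
    (hdR : HasRadius R d) : delta c d = deltaR R c d :=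
  (deltaR_eq_of_le (hc.hasRadius_rad.mono (le_max_left _ _))
    (hd.hasRadius_rad.mono (le_max_right _ _)) (max_le (rad_le hcR) (rad_le hdR))).symm

theorem delta_nonneg (c d : (ℤ → A) → (ℤ → A)) : 0 ≤ delta c d := by
  unfold delta deltaR
  positivity

theorem ncard_wordPreimages [Nonempty A] (hd : HasRadius r d) (hsurj : Surjective d) {n : ℕ}
    (v : Word A n) : (wordPreimages d n r v).ncard = Fintype.card A ^ (2 * r) := by
  classical
  obtain ⟨G, hG⟩ := hd.exists_localRule
  let e₀ := finEquivIcc n (2 * n + 1) rfl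
  let e₁ := finEquivIcc (n + r) (2 * n + 1 + 2 * r) (by omega)
  let ε : Word A (n + r) ≃ (Fin (2 * n + 1 + 2 * r) → A) := e₁.symm.arrowCongr (Equiv.refl A)
  have hε : ∀ u i, SlidingBlock.wordMap G (2 * n + 1) (ε u) i = d u.extend (e₀ i) := by
    intro u i
    rw [hG]
    refine congrArg G (funext fun l => ?_)
    have hmem : (e₀ i : ℤ) + l - r ∈ Finset.Icc (-((n + r : ℕ) : ℤ)) ((n + r : ℕ) : ℤ) := by
      simp only [e₀, finEquivIcc, Equiv.coe_fn_mk, Finset.mem_Icc]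
      omega
    rw [u.extend_of_mem hmem]
    exact congrArg u (Subtype.ext (by simp [e₀, e₁, finEquivIcc]; ring))
  have hset : wordPreimages d n r v = ε ⁻¹' {x | SlidingBlock.wordMap G _ x = v ∘ e₀} := by
    ext u
    rw [mem_wordPreimages_iff hd, ← e₀.forall_congr_right]
    simp only [Set.mem_preimage, Set.mem_ofPred_eq, funext_iff, hε]
    rfl
  rw [hset, Set.ncard_preimage_of_injective_subset_range ε.injective (by simp),
    Set.ncard_eq_toFinset_card', Set.toFinset_ofPred]
  exact SlidingBlock.preimageCount_eq_pow G (wordMap_surjective hG hsurj) _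

theorem ncard_diffSet_comp_le [Nonempty A] {ci di : (ℤ → A) → (ℤ → A)} (hci : HasRadius t ci)
    (hct : HasRadius t c) (hc : HasRadius r c) (hrt : r ≤ t) (hdi : HasRadius s di)
    (hds : HasRadius s d) (hsurj : Surjective di) :
    (diffSet (t + s) (ci ∘ di) (c ∘ d)).ncard ≤ Fintype.card A ^ (2 * s) * (diffSet t ci c).ncard +
      (2 * r + 1) * (Fintype.card A ^ (2 * t) * (diffSet s di d).ncard) := by
  let φ : Word A (t + s) → Word A t := fun w k => di w.extend k
  have hφ : ∀ w : Word A (t + s), ∀ k : ℤ, |k| ≤ t →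
      di w.extend (0 + k) = (φ w).extend (0 + k) := fun w k hk => by
    have hk' : 0 + k ∈ Finset.Icc (-(t : ℤ)) t := by rw [abs_le] at hk; simpa using hk
    rw [(φ w).extend_of_mem hk']
  have hsub : diffSet (t + s) (ci ∘ di) (c ∘ d) ⊆ φ ⁻¹' diffSet t ci c ∪
      ⋃ j ∈ Finset.Icc (-(r : ℤ)) r, {w | di w.extend j ≠ d w.extend j} := by
    intro w hw
    rw [mem_diffSet_iff (hci.comp hdi) (hct.comp hds) le_rfl] at hw
    by_cases h : ci (di w.extend) 0 = c (di w.extend) 0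
    · obtain ⟨j, hj, hne⟩ :=
        hc.exists_ne_of_apply_ne (h ▸ hw : c (di w.extend) 0 ≠ c (d w.extend) 0)
      refine Or.inr (Set.mem_biUnion (x := j) ?_ ?_)
      · rw [abs_le] at hj; simpa using hj
      · simpa using hne
    · left
      rw [Set.mem_preimage, mem_diffSet_iff hci hct le_rfl, ← hci.apply_eq_apply (hφ w),
        ← hct.apply_eq_apply (hφ w)]
      exact h
  have hfiber : ∀ v, (φ ⁻¹' {v}).ncard = Fintype.card A ^ (2 * s) := fun v => by
    rw [← ncard_wordPreimages hdi hsurj v]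
    congr 1
    ext w
    rw [Set.mem_preimage, Set.mem_singleton_iff, mem_wordPreimages_iff hdi]
    exact funext_iff
  calc (diffSet (t + s) (ci ∘ di) (c ∘ d)).ncard
      ≤ (φ ⁻¹' diffSet t ci c).ncard + ∑ j ∈ Finset.Icc (-(r : ℤ)) r,
          {w : Word A (t + s) | di w.extend j ≠ d w.extend j}.ncard :=
        (Set.ncard_le_ncard hsub).trans <| (Set.ncard_union_le _ _).trans <|
          add_le_add_right (Finset.set_ncard_biUnion_le _ _) _
    _ = _ := by
        rw [ncard_preimage_of_forall_ncard_fiber hfiber, sum_congr rfl fun j hj =>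
          ncard_setOf_apply_ne hdi hds (R := t + s) (j := j) (by
            have := abs_le.2 (Finset.mem_Icc.1 hj); push_cast; omega),
          sum_const, Int.card_Icc, smul_eq_mul, show 2 * (t + s) - 2 * s = 2 * t by omega]
        congr 2
        omega

theorem delta_comp_le [Nonempty A] {ci di : (ℤ → A) → (ℤ → A)} (hci : IsCA ci) (hdi : IsCA di)
    (hc : IsCA c) (hd : IsCA d) (hsurj : Surjective di) :
    delta (ci ∘ di) (c ∘ d) ≤ delta ci c + (2 * rad c + 1) * delta di d := by
  set t := max (rad ci) (rad c)
  set s := max (rad di) (rad d)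
  have hcit : HasRadius t ci := hci.hasRadius_rad.mono (le_max_left _ _)
  have hct : HasRadius t c := hc.hasRadius_rad.mono (le_max_right _ _)
  have hdis : HasRadius s di := hdi.hasRadius_rad.mono (le_max_left _ _)
  have hds : HasRadius s d := hd.hasRadius_rad.mono (le_max_right _ _)
  have hq : (0 : ℝ) < Fintype.card A := by exact_mod_cast Fintype.card_pos
  have hcount : ((diffSet (t + s) (ci ∘ di) (c ∘ d)).ncard : ℝ) ≤
      (Fintype.card A : ℝ) ^ (2 * s) * (diffSet t ci c).ncard +
        (2 * rad c + 1) * ((Fintype.card A : ℝ) ^ (2 * t) * (diffSet s di d).ncard) := by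
    exact_mod_cast
      ncard_diffSet_comp_le hcit hct hc.hasRadius_rad (le_max_right _ _) hdis hds hsurj
  rw [delta_eq_deltaR ⟨_, hcit.comp hdis⟩ ⟨_, hct.comp hds⟩ (hcit.comp hdis) (hct.comp hds)]
  change deltaR _ _ _ ≤ deltaR t ci c + _ * deltaR s di d
  rw [deltaR, deltaR, deltaR, div_le_iff₀ (by positivity)]
  refine hcount.trans_eq ?_
  field_simp
  ring

end Counting

end CellularAutomata

/-- composition restricted to `CA × SUR` is continuous, with the
quantitative bound `δ(cᵢ ∘ dᵢ, c ∘ d) < (2 r(c) + 2) ε`. -/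
theorem stmt3 {A : Type} [Fintype A] (hA : 2 ≤ Fintype.card A) :
    (∀ (cs ds : ℕ → (ℤ → A) → (ℤ → A)) (c d : (ℤ → A) → (ℤ → A)),
      (∀ i, IsCA (cs i)) → (∀ i, IsCA (ds i)) → IsCA c → IsCA d →
      (∀ i, Function.Surjective (ds i)) → Function.Surjective d →
      Tendsto (fun i => delta (cs i) c) atTop (nhds 0) →
      Tendsto (fun i => delta (ds i) d) atTop (nhds 0) →
      Tendsto (fun i => delta (cs i ∘ ds i) (c ∘ d)) atTop (nhds 0)) ∧
    (∀ (ci di c d : (ℤ → A) → (ℤ → A)) (ε : ℝ),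
      IsCA ci → IsCA di → IsCA c → IsCA d →
      Function.Surjective di →
      rad c ≤ rad ci → rad d ≤ rad di →
      delta ci c < ε → delta di d < ε →
      delta (ci ∘ di) (c ∘ d) < (2 * (rad c : ℝ) + 2) * ε) := by
  have : Nonempty A := Fintype.card_pos_iff.mp (by omega)
  refine ⟨fun cs ds c d hcs hds hc hd hsurj _ hc₀ hd₀ => ?_,
    fun ci di c d ε hci hdi hc hd hsurj _ _ hεc hεd => ?_⟩
  · refine squeeze_zero (fun i => delta_nonneg _ _)
      (fun i => delta_comp_le (hcs i) (hds i) hc hd (hsurj i)) ?_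
    simpa using hc₀.add (hd₀.const_mul (2 * (rad c : ℝ) + 1))
  · calc delta (ci ∘ di) (c ∘ d) ≤ delta ci c + (2 * rad c + 1) * delta di d :=
          delta_comp_le hci hdi hc hd hsurj
      _ < ε + (2 * rad c + 1) * ε := by gcongr
      _ = (2 * (rad c : ℝ) + 2) * ε := by ring
end

section
/- Let μ be a Borel probability measure on Σ^ℤ. The function δ^μ(c,d) = μ([D(c,d)]₀), where D(c,d) is the difference set of c and d for a common radius, is a pseudometric on the set of cellular automata, and it is a metric if and only if μ has full support. -/
open MeasureTheory Filter Function

/-! A cellular automaton reads its input only through a finite window, so two distinct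
automata disagree at the origin on a whole cylinder; when every cylinder has positive
measure, `δ^μ(c, d) = 0` therefore forces `c = d`. Conversely, if some cylinder `[x]_r`
is null, the automaton that writes a symbol `a ≠ x₀` exactly where the `r`-neighbourhood
of a cell matches `x` differs from the identity only on `[x]_r`, so it lies at
`δ^μ`-distance `0` from the identity. -/

variable {A : Type}

section Pseudometric

variable [MeasurableSpace A] (μ : Measure (ℤ → A))

lemma deltaMu_eq_measureReal (c d : (ℤ → A) → (ℤ → A)) :
    deltaMu μ c d = μ.real {x | c x 0 ≠ d x 0} := rfl

lemma deltaMu_self (c : (ℤ → A) → (ℤ → A)) : deltaMu μ c c = 0 := by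
  simp [deltaMu]

lemma deltaMu_nonneg (c d : (ℤ → A) → (ℤ → A)) : 0 ≤ deltaMu μ c d :=
  measureReal_nonneg

lemma deltaMu_comm (c d : (ℤ → A) → (ℤ → A)) : deltaMu μ c d = deltaMu μ d c := by
  simp only [deltaMu_eq_measureReal, ne_comm]

lemma deltaMu_triangle [IsFiniteMeasure μ] (c d e : (ℤ → A) → (ℤ → A)) :
    deltaMu μ c e ≤ deltaMu μ c d + deltaMu μ d e := by
  have hsub : {x | c x 0 ≠ e x 0} ⊆ {x | c x 0 ≠ d x 0} ∪ {x | d x 0 ≠ e x 0} := by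
    intro x hce
    simp only [Set.mem_union, Set.mem_ofPred_eq]
    by_contra! hcde
    exact hce (hcde.1.trans hcde.2)
  simp only [deltaMu_eq_measureReal]
  exact (measureReal_mono hsub).trans (measureReal_union_le _ _)

lemma deltaMu_eq_zero_iff [IsFiniteMeasure μ] (c d : (ℤ → A) → (ℤ → A)) :
    deltaMu μ c d = 0 ↔ μ {x | c x 0 ≠ d x 0} = 0 :=
  measureReal_eq_zero_iff

end Pseudometric

section Cylinder

def cyl (x : ℤ → A) (r : ℕ) : Set (ℤ → A) := {y | ∀ j : ℤ, |j| ≤ (r : ℤ) → y j = x j}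

lemma mem_cyl_self (x : ℤ → A) (r : ℕ) : x ∈ cyl x r := fun _ _ => rfl

variable [TopologicalSpace A]

lemma isOpen_cyl [DiscreteTopology A] (x : ℤ → A) (r : ℕ) : IsOpen (cyl x r) := by
  have hcyl : cyl x r = ⋂ j ∈ Finset.Icc (-(r : ℤ)) r, (fun y : ℤ → A => y j) ⁻¹' {x j} := by
    ext y
    simp [cyl, abs_le]
  rw [hcyl]
  exact isOpen_biInter_finset fun j _ => (continuous_apply j).isOpen_preimage _ (isOpen_discrete _)

lemma exists_cyl_subset_of_mem_isOpen {U : Set (ℤ → A)} (hU : IsOpen U) {x : ℤ → A}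
    (hx : x ∈ U) : ∃ r, cyl x r ⊆ U := by
  obtain ⟨I, u, hu, hIU⟩ := isOpen_pi_iff.mp hU x hx
  refine ⟨I.sup Int.natAbs, fun y hy => hIU fun i hi => ?_⟩
  have hyi : y i = x i := hy i (by
    rw [Int.abs_eq_natAbs]
    exact_mod_cast Finset.le_sup (f := Int.natAbs) hi)
  rw [hyi]
  exact (hu i hi).2

end Cylinder

section CellularAutomata

lemma HasRadius.mono_s10 {r s : ℕ} {f : (ℤ → A) → (ℤ → A)} (hf : HasRadius r f) (hrs : r ≤ s) :
    HasRadius s f := by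
  obtain ⟨F, hF, hfF⟩ := hf
  exact ⟨F, fun x y hxy => hF x y fun j hj => hxy j (hj.trans (by exact_mod_cast hrs)), hfF⟩

lemma HasRadius.apply_zero_eq {r : ℕ} {f : (ℤ → A) → (ℤ → A)} (hf : HasRadius r f)
    (x : ℤ → A) (i : ℤ) {y : ℤ → A} (hy : y ∈ cyl (fun j => x (i + j)) r) : f y 0 = f x i := by
  obtain ⟨F, hF, hfF⟩ := hf
  rw [hfF y, hfF x]
  exact hF _ _ fun j hj => by simpa using hy j hj

lemma IsCA.exists_cyl_subset_ne {c d : (ℤ → A) → (ℤ → A)} (hc : IsCA c) (hd : IsCA d)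
    (hcd : c ≠ d) : ∃ z r, cyl z r ⊆ {y | c y 0 ≠ d y 0} := by
  obtain ⟨rc, hrc⟩ := hc
  obtain ⟨rd, hrd⟩ := hd
  obtain ⟨x, i, hxi⟩ : ∃ x i, c x i ≠ d x i := by
    by_contra! h
    exact hcd (funext fun x => funext (h x))
  refine ⟨fun j => x (i + j), max rc rd, fun y hy => ?_⟩
  rw [Set.mem_ofPred_eq, (hrc.mono_s10 (le_max_left rc rd)).apply_zero_eq x i hy,
    (hrd.mono_s10 (le_max_right rc rd)).apply_zero_eq x i hy]
  exact hxi

lemma isCA_id : IsCA (id : (ℤ → A) → (ℤ → A)) :=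
  ⟨0, fun y => y 0, fun _ _ h => h 0 (by simp), fun _ _ => by simp⟩

open Classical in
noncomputable def recolor (x : ℤ → A) (r : ℕ) (a : A) (y : ℤ → A) (i : ℤ) : A :=
  if (fun j => y (i + j)) ∈ cyl x r then a else y i

lemma recolor_apply_zero_of_mem {x y : ℤ → A} {r : ℕ} (a : A) (hy : y ∈ cyl x r) :
    recolor x r a y 0 = a := by
  simp [recolor, hy]

lemma recolor_apply_zero_of_notMem {x y : ℤ → A} {r : ℕ} (a : A) (hy : y ∉ cyl x r) :
    recolor x r a y 0 = y 0 := by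
  simp [recolor, hy]

lemma isCA_recolor (x : ℤ → A) (r : ℕ) (a : A) : IsCA (recolor x r a) := by
  classical
  refine ⟨r, fun y => if y ∈ cyl x r then a else y 0, fun y z hyz => ?_, fun y i => by
    simp [recolor]⟩
  have hmem : y ∈ cyl x r ↔ z ∈ cyl x r :=
    forall₂_congr fun j hj => by rw [hyz j hj]
  simp only [hmem, hyz 0 (by simp)]

lemma setOf_ne_recolor {x : ℤ → A} (r : ℕ) {a : A} (ha : a ≠ x 0) :
    {y : ℤ → A | id y 0 ≠ recolor x r a y 0} = cyl x r := by
  ext y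
  by_cases hy : y ∈ cyl x r
  · simpa [recolor_apply_zero_of_mem a hy, hy, hy 0 (by simp)] using ha.symm
  · simpa [recolor_apply_zero_of_notMem a hy] using hy

end CellularAutomata

section Metric

variable [MeasurableSpace A] [TopologicalSpace A] {μ : Measure (ℤ → A)}
  [IsFiniteMeasure μ]

lemma IsCA.eq_of_deltaMu_eq_zero [DiscreteTopology A] [μ.IsOpenPosMeasure]
    {c d : (ℤ → A) → (ℤ → A)} (hc : IsCA c) (hd : IsCA d) (hcd : deltaMu μ c d = 0) : c = d := by
  by_contra hne
  obtain ⟨z, r, hsub⟩ := hc.exists_cyl_subset_ne hd hne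
  exact (isOpen_cyl z r).measure_ne_zero μ ⟨z, mem_cyl_self z r⟩
    (measure_mono_null hsub ((deltaMu_eq_zero_iff μ c d).mp hcd))

lemma isOpenPosMeasure_of_eq_of_deltaMu_eq_zero [Nontrivial A]
    (h : ∀ c d : (ℤ → A) → (ℤ → A), IsCA c → IsCA d → deltaMu μ c d = 0 → c = d) :
    μ.IsOpenPosMeasure := by
  refine ⟨fun U hU ⟨x, hx⟩ hU0 => ?_⟩
  obtain ⟨r, hsub⟩ := exists_cyl_subset_of_mem_isOpen hU hx
  obtain ⟨a, ha⟩ := exists_ne (x 0)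
  have hid : id = recolor x r a := by
    refine h _ _ isCA_id (isCA_recolor x r a) ((deltaMu_eq_zero_iff μ _ _).mpr ?_)
    rw [setOf_ne_recolor r ha]
    exact measure_mono_null hsub hU0
  have hx0 : x 0 = a := by
    simpa [recolor_apply_zero_of_mem a (mem_cyl_self x r)] using congrFun (congrFun hid x) 0
  exact ha hx0.symm

end Metric

theorem stmt10_general {A : Type} [Fintype A] [TopologicalSpace A] [DiscreteTopology A]
    [MeasurableSpace A] (hA : 2 ≤ Fintype.card A)
    (μ : Measure (ℤ → A)) [IsProbabilityMeasure μ] :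
    ((∀ c : (ℤ → A) → (ℤ → A), deltaMu μ c c = 0) ∧
     (∀ c d : (ℤ → A) → (ℤ → A), 0 ≤ deltaMu μ c d) ∧
     (∀ c d : (ℤ → A) → (ℤ → A), deltaMu μ c d = deltaMu μ d c) ∧
     (∀ c d e : (ℤ → A) → (ℤ → A), IsCA c → IsCA d → IsCA e →
        deltaMu μ c e ≤ deltaMu μ c d + deltaMu μ d e)) ∧
    ((∀ c d : (ℤ → A) → (ℤ → A), IsCA c → IsCA d → deltaMu μ c d = 0 → c = d) ↔
      (∀ U : Set (ℤ → A), IsOpen U → U.Nonempty → 0 < μ U)) := by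
  have : Nontrivial A := Fintype.one_lt_card_iff_nontrivial.mp hA
  refine ⟨⟨deltaMu_self μ, deltaMu_nonneg μ, deltaMu_comm μ,
    fun c d e _ _ _ => deltaMu_triangle μ c d e⟩, ⟨fun h U hU hne => ?_, fun h c d => ?_⟩⟩
  · have := isOpenPosMeasure_of_eq_of_deltaMu_eq_zero h
    exact hU.measure_pos μ hne
  · have : μ.IsOpenPosMeasure := ⟨fun U hU hne => (h U hU hne).ne'⟩
    exact IsCA.eq_of_deltaMu_eq_zero

/-- `δ^μ(c,d) = μ({x : c(x)₀ ≠ d(x)₀})` is a pseudometric on the set of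
cellular automata, and it is a metric if and only if `μ` has full support. -/
theorem stmt10 {A : Type} [Fintype A] [TopologicalSpace A] [DiscreteTopology A]
    [MeasurableSpace A] [BorelSpace A] (hA : 2 ≤ Fintype.card A)
    (μ : Measure (ℤ → A)) [IsProbabilityMeasure μ] :
    ((∀ c : (ℤ → A) → (ℤ → A), deltaMu μ c c = 0) ∧
     (∀ c d : (ℤ → A) → (ℤ → A), 0 ≤ deltaMu μ c d) ∧
     (∀ c d : (ℤ → A) → (ℤ → A), deltaMu μ c d = deltaMu μ d c) ∧
     (∀ c d e : (ℤ → A) → (ℤ → A), IsCA c → IsCA d → IsCA e →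
        deltaMu μ c e ≤ deltaMu μ c d + deltaMu μ d e)) ∧
    ((∀ c d : (ℤ → A) → (ℤ → A), IsCA c → IsCA d → deltaMu μ c d = 0 → c = d) ↔
      (∀ U : Set (ℤ → A), IsOpen U → U.Nonempty → 0 < μ U)) :=
  stmt10_general hA μ
end
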